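/- arXiv:2107.06905 — 2 statements merged into one kernel-verified Lean document; each statement's English description precedes it below -/
import Mathlib

section
/- (Contained-projections invariant) For every sentence W = w_1, …, w_n and every reachable configuration (σ, β, B, φ, A, O) of the Bubble-Hybrid transition system for W, the contained-projections condition holds: for all α1, α2 ∈ B, if α2 is reachable from α1 by a nonempty directed path of arcs in A, then either ψ(α2) ⊆ φ(α1) or ψ(α2) ∩ φ(α1) = ∅. -/
/-- Ground node set `V`: `none` is the dummy root `RT`,
`some i` represents the word `w_{i+1}` (0-indexed internally). -/
abbrev BNode (n : ℕ) := Option (Fin n)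

/-- A parser configuration `(σ, β, B, φ, A, O)`.
The stack's top is the head of `stack`; the buffer's front is the head of `buffer`. -/
structure Config (n : ℕ) (L : Type*) where
  stack : List ℕ
  buffer : List ℕ
  bubbles : Finset ℕ
  content : ℕ → Set (BNode n)
  arcs : Set (ℕ × L × ℕ)
  openB : Finset ℕ

/-- `α1 → α2`: there is an arc from `α1` to `α2` with some label. -/
def ArcRel {L : Type*} (arcs : Set (ℕ × L × ℕ)) (a b : ℕ) : Prop :=
  ∃ l, (a, l, b) ∈ arcs

/-- Projection `ψ(α)`: union of the contents of all bubbles reachable from `α`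
(reflexive-transitive closure of the arc relation). -/
def projOf {n : ℕ} {L : Type*} (arcs : Set (ℕ × L × ℕ)) (φ : ℕ → Set (BNode n))
    (α : ℕ) : Set (BNode n) :=
  {v | ∃ α', Relation.ReflTransGen (ArcRel arcs) α α' ∧ v ∈ φ α'}

/-- `ψ` of a configuration. -/
def Config.proj {n : ℕ} {L : Type*} (c : Config n L) (α : ℕ) : Set (BNode n) :=
  projOf c.arcs c.content α

/-- Initial configuration `c^i(W)`: bubble `0` is the singleton `{RT}`,
bubble `i` (for `1 ≤ i ≤ n`) is the singleton `{w_i}`. -/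
def initConfig (n : ℕ) (L : Type*) : Config n L where
  stack := [0]
  buffer := (List.range n).map (· + 1)
  bubbles := Finset.range (n + 1)
  content := fun i =>
    {v | (i = 0 ∧ v = none) ∨ ∃ k : Fin n, i = (k : ℕ) + 1 ∧ v = some k}
  arcs := ∅
  openB := ∅

/-- Terminal configuration: empty buffer, and the stack is the single bubble
with content `{RT}`. -/
def Terminal {n : ℕ} {L : Type*} (c : Config n L) : Prop :=
  c.buffer = [] ∧ ∃ r, c.stack = [r] ∧ c.content r = {(none : BNode n)}

/-- The Bubble-Hybrid transitions. -/
inductive Step {n : ℕ} {L : Type*} (conj : L) : Config n L → Config n L → Prop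
  | shift (c : Config n L) (b1 : ℕ) (β : List ℕ)
      (hbuf : c.buffer = b1 :: β) :
      Step conj c { c with stack := b1 :: c.stack, buffer := β }
  | leftArc (c : Config n L) (lbl : L) (s1 : ℕ) (σ : List ℕ) (b1 : ℕ) (β : List ℕ)
      (hstk : c.stack = s1 :: σ) (hbuf : c.buffer = b1 :: β)
      (hs1 : s1 ∉ c.openB) (hb1 : b1 ∉ c.openB)
      (hroot : c.content s1 ≠ {(none : BNode n)}) :
      Step conj c { c with stack := σ, arcs := insert (b1, lbl, s1) c.arcs }
  | rightArc (c : Config n L) (lbl : L) (s1 s2 : ℕ) (σ : List ℕ)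
      (hstk : c.stack = s1 :: s2 :: σ)
      (hs1 : s1 ∉ c.openB) (hs2 : s2 ∉ c.openB) :
      Step conj c { c with stack := s2 :: σ, arcs := insert (s2, lbl, s1) c.arcs }
  | bubbleOpen (c : Config n L) (lbl : L) (s1 s2 : ℕ) (σ : List ℕ) (α : ℕ)
      (hstk : c.stack = s1 :: s2 :: σ)
      (hs1 : s1 ∉ c.openB) (hs2 : s2 ∉ c.openB)
      (hroot : c.content s2 ≠ {(none : BNode n)})
      (hfresh : α ∉ c.bubbles) :
      Step conj c
        { stack := α :: σ
          buffer := c.buffer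
          bubbles := insert α c.bubbles
          content := Function.update c.content α (c.proj s2 ∪ c.proj s1)
          arcs := insert (α, conj, s2) (insert (α, lbl, s1) c.arcs)
          openB := insert α c.openB }
  | bubbleAttach (c : Config n L) (lbl : L) (s1 s2 : ℕ) (σ : List ℕ)
      (hstk : c.stack = s1 :: s2 :: σ)
      (hs1 : s1 ∉ c.openB) (hs2 : s2 ∈ c.openB) :
      Step conj c
        { c with
          stack := s2 :: σ
          content := Function.update c.content s2 (c.content s2 ∪ c.proj s1)
          arcs := insert (s2, lbl, s1) c.arcs }
  | bubbleClose (c : Config n L) (s1 : ℕ) (σ : List ℕ)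
      (hstk : c.stack = s1 :: σ) (hs1 : s1 ∈ c.openB) :
      Step conj c
        { c with stack := σ, buffer := s1 :: c.buffer, openB := c.openB.erase s1 }

/-- A configuration is reachable if it is obtained from the initial configuration
by a finite sequence of transitions. -/
def Reachable {n : ℕ} {L : Type*} (conj : L) (c : Config n L) : Prop :=
  Relation.ReflTransGen (Step conj) (initConfig n L) c

/-- `arcs` forms a directed tree on the bubble set `B`. -/
def IsTreeOn {L : Type*} (B : Finset ℕ) (arcs : Set (ℕ × L × ℕ)) : Prop :=
  (∀ a l b, (a, l, b) ∈ arcs → a ∈ B ∧ b ∈ B) ∧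
  ∃ r ∈ B,
    (¬ ∃ p l, (p, l, r) ∈ arcs) ∧
    (∀ b ∈ B, b ≠ r → ∃! pl : ℕ × L, (pl.1, pl.2, b) ∈ arcs) ∧
    (∀ b ∈ B, Relation.ReflTransGen (ArcRel arcs) r b)

/-- Well-formed bubble tree on a length-`n` sentence. -/
def WellFormed {L : Type*} (n : ℕ) (B : Finset ℕ) (φ : ℕ → Set (BNode n))
    (arcs : Set (ℕ × L × ℕ)) : Prop :=
  IsTreeOn B arcs ∧
  -- contents are nonempty
  (∀ α ∈ B, (φ α).Nonempty) ∧
  -- no partial overlap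
  (∀ α1 ∈ B, ∀ α2 ∈ B, φ α1 ∩ φ α2 = ∅ ∨ φ α1 ⊆ φ α2 ∨ φ α2 ⊆ φ α1) ∧
  -- non-duplication
  (∀ α1 ∈ B, ∀ α2 ∈ B, φ α1 = φ α2 → α1 = α2) ∧
  -- lexical coverage
  (∀ v : BNode n, ∃ α ∈ B, φ α = {v}) ∧
  -- roothood
  (∃ r ∈ B, φ r = {(none : BNode n)} ∧
    (∀ α ∈ B, (none : BNode n) ∈ φ α → α = r) ∧
    (¬ ∃ p l, (p, l, r) ∈ arcs) ∧
    (∀ b ∈ B, Relation.ReflTransGen (ArcRel arcs) r b)) ∧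
  -- containment
  (∀ α1 ∈ B, ∀ α2 ∈ B, φ α2 ⊂ φ α1 → Relation.ReflTransGen (ArcRel arcs) α1 α2)

/-- Projectivity conditions for a well-formed bubble tree. -/
def Projective {L : Type*} (n : ℕ) (B : Finset ℕ) (φ : ℕ → Set (BNode n))
    (arcs : Set (ℕ × L × ℕ)) : Prop :=
  -- continuous coverage
  (∀ α ∈ B, ∀ i j k : Fin n, i < k → k < j →
    some i ∈ φ α → some j ∈ φ α → some k ∈ φ α) ∧
  -- continuous projections
  (∀ α ∈ B, ∀ i j k : Fin n, i < k → k < j →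
    some i ∈ projOf arcs φ α → some j ∈ projOf arcs φ α →
    some k ∈ projOf arcs φ α) ∧
  -- contained projections
  (∀ α1 ∈ B, ∀ α2 ∈ B, Relation.TransGen (ArcRel arcs) α1 α2 →
    projOf arcs φ α2 ⊆ φ α1 ∨ projOf arcs φ α2 ∩ φ α1 = ∅)

section Aux

open Relation

variable {n : ℕ} {L : Type*}

lemma arcRel_insert {arcs : Set (ℕ × L × ℕ)} {u v a b : ℕ} {l : L} :
    ArcRel (insert (u, l, v) arcs) a b ↔ ArcRel arcs a b ∨ (a = u ∧ b = v) := by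
  constructor
  · rintro ⟨l', hl'⟩
    rcases Set.mem_insert_iff.1 hl' with h | h
    · obtain ⟨rfl, rfl, rfl⟩ : a = u ∧ l' = l ∧ b = v := by
        simpa [Prod.ext_iff] using h
      exact Or.inr ⟨rfl, rfl⟩
    · exact Or.inl ⟨l', h⟩
  · rintro (⟨l', h⟩ | ⟨rfl, rfl⟩)
    · exact ⟨l', Set.mem_insert_iff.2 (Or.inr h)⟩
    · exact ⟨l, Set.mem_insert_iff.2 (Or.inl rfl)⟩

lemma arcRel_insert_of {arcs : Set (ℕ × L × ℕ)} {e : ℕ × L × ℕ} {a b : ℕ}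
    (h : ArcRel arcs a b) : ArcRel (insert e arcs) a b :=
  ⟨h.choose, Set.mem_insert_iff.2 (Or.inr h.choose_spec)⟩

lemma rtg_mono_insert {arcs : Set (ℕ × L × ℕ)} {e : ℕ × L × ℕ} {a b : ℕ}
    (h : ReflTransGen (ArcRel arcs) a b) : ReflTransGen (ArcRel (insert e arcs)) a b :=
  by
    induction h with
    | refl => exact .refl
    | tail _ hr ih => exact ih.tail (arcRel_insert_of hr)

lemma rtg_no_incoming {arcs : Set (ℕ × L × ℕ)} {u x : ℕ}
    (hin : ∀ p, ¬ ArcRel arcs p u) (h : ReflTransGen (ArcRel arcs) x u) :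
    x = u := by
  rcases h.cases_tail with h | ⟨c, _, hc⟩
  · exact h.symm
  · exact absurd hc (hin c)

lemma rtg_no_outgoing {arcs : Set (ℕ × L × ℕ)} {u y : ℕ}
    (hout : ∀ q, ¬ ArcRel arcs u q) (h : ReflTransGen (ArcRel arcs) u y) :
    y = u := by
  rcases h.cases_head with h | ⟨c, hc, _⟩
  · exact h.symm
  · exact absurd hc (hout c)

lemma rtg_insert {arcs : Set (ℕ × L × ℕ)} {u v : ℕ} {l : L}
    (hin : ∀ p, ¬ ArcRel (insert (u, l, v) arcs) p u)
    {x y : ℕ} (h : ReflTransGen (ArcRel (insert (u, l, v) arcs)) x y) :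
    ReflTransGen (ArcRel arcs) x y ∨ (x = u ∧ ReflTransGen (ArcRel arcs) v y) := by
  induction h using Relation.ReflTransGen.head_induction_on with
  | refl => exact Or.inl .refl
  | head hxz h' ih =>
    rename_i a z
    have hz : z ≠ u := fun hzu => hin a (hzu ▸ hxz)
    have ihz : ReflTransGen (ArcRel arcs) z y := by
      rcases ih with h | ⟨rfl, _⟩
      · exact h
      · exact absurd rfl hz
    rcases arcRel_insert.1 hxz with har | ⟨rfl, rfl⟩
    · exact Or.inl (ReflTransGen.head har ihz)
    · exact Or.inr ⟨rfl, ihz⟩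

lemma projOf_insert_of_ne {arcs : Set (ℕ × L × ℕ)} {u v : ℕ} {l : L}
    {φ : ℕ → Set (BNode n)}
    (hin : ∀ p, ¬ ArcRel (insert (u, l, v) arcs) p u) {x : ℕ} (hx : x ≠ u) :
    projOf (insert (u, l, v) arcs) φ x = projOf arcs φ x := by
  ext w
  constructor
  · rintro ⟨y, hy, hw⟩
    rcases rtg_insert hin hy with h | ⟨rfl, _⟩
    · exact ⟨y, h, hw⟩
    · exact absurd rfl hx
  · rintro ⟨y, hy, hw⟩
    exact ⟨y, rtg_mono_insert hy, hw⟩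

lemma projOf_insert_src {arcs : Set (ℕ × L × ℕ)} {u v : ℕ} {l : L}
    {φ : ℕ → Set (BNode n)}
    (hin : ∀ p, ¬ ArcRel (insert (u, l, v) arcs) p u) :
    projOf (insert (u, l, v) arcs) φ u = projOf arcs φ u ∪ projOf arcs φ v := by
  ext w
  constructor
  · rintro ⟨y, hy, hw⟩
    rcases rtg_insert hin hy with h | ⟨_, h⟩
    · exact Or.inl ⟨y, h, hw⟩
    · exact Or.inr ⟨y, h, hw⟩
  · rintro (⟨y, hy, hw⟩ | ⟨y, hy, hw⟩)
    · exact ⟨y, rtg_mono_insert hy, hw⟩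
    · exact ⟨y, ReflTransGen.head ⟨l, Set.mem_insert _ _⟩ (rtg_mono_insert hy), hw⟩

lemma content_subset_projOf {arcs : Set (ℕ × L × ℕ)} {φ : ℕ → Set (BNode n)} {x : ℕ} :
    φ x ⊆ projOf arcs φ x := fun _ hv => ⟨x, .refl, hv⟩

lemma projOf_subset_of_rtg {arcs : Set (ℕ × L × ℕ)} {φ : ℕ → Set (BNode n)} {x y : ℕ}
    (h : ReflTransGen (ArcRel arcs) x y) :
    projOf arcs φ y ⊆ projOf arcs φ x := fun _ ⟨z, hz, hv⟩ => ⟨z, h.trans hz, hv⟩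

lemma projOf_update_of_not_reach {arcs : Set (ℕ × L × ℕ)} {φ : ℕ → Set (BNode n)}
    {x t : ℕ} {S : Set (BNode n)}
    (ht : ∀ y, ReflTransGen (ArcRel arcs) x y → y ≠ t) :
    projOf arcs (Function.update φ t S) x = projOf arcs φ x := by
  ext w
  constructor
  · rintro ⟨y, hy, hw⟩
    exact ⟨y, hy, by rwa [Function.update_of_ne (ht y hy)] at hw⟩
  · rintro ⟨y, hy, hw⟩
    exact ⟨y, hy, by rwa [Function.update_of_ne (ht y hy)]⟩

lemma projOf_update_self {arcs : Set (ℕ × L × ℕ)} {φ : ℕ → Set (BNode n)}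
    {t : ℕ} {S : Set (BNode n)} :
    projOf arcs (Function.update φ t (φ t ∪ S)) t = projOf arcs φ t ∪ S := by
  ext w
  constructor
  · rintro ⟨y, hy, hw⟩
    by_cases hy' : y = t
    · subst hy'
      rw [Function.update_self] at hw
      rcases hw with hw | hw
      · exact Or.inl ⟨y, hy, hw⟩
      · exact Or.inr hw
    · rw [Function.update_of_ne hy'] at hw
      exact Or.inl ⟨y, hy, hw⟩
  · rintro (⟨y, hy, hw⟩ | hw)
    · by_cases hy' : y = t
      · subst hy'
        exact ⟨y, hy, by rw [Function.update_self]; exact Or.inl hw⟩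
      · exact ⟨y, hy, by rwa [Function.update_of_ne hy']⟩
    · exact ⟨t, .refl, by rw [Function.update_self]; exact Or.inr hw⟩

end Aux
section Inv

open Relation List

variable {n : ℕ} {L : Type*}

lemma projOf_no_outgoing {arcs : Set (ℕ × L × ℕ)} {φ : ℕ → Set (BNode n)} {x : ℕ}
    (hout : ∀ q, ¬ ArcRel arcs x q) : projOf arcs φ x = φ x := by
  ext w
  constructor
  · rintro ⟨y, hy, hw⟩
    rwa [rtg_no_outgoing hout hy] at hw
  · intro hw; exact ⟨x, .refl, hw⟩

/-- The inductive invariant, on raw components. `act` is the list of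
active bubbles (stack followed by buffer). -/
def InvOn (act : List ℕ) (B : Finset ℕ) (φ : ℕ → Set (BNode n))
    (arcs : Set (ℕ × L × ℕ)) : Prop :=
  (∀ a (l : L) b, (a, l, b) ∈ arcs → a ∈ B ∧ b ∈ B ∧ b ∉ act) ∧
  (∀ x ∈ act, x ∈ B) ∧
  act.Nodup ∧
  (∀ a ∈ act, ∀ b ∈ act, a ≠ b →
      ∀ v, v ∈ projOf arcs φ a → v ∈ projOf arcs φ b → False) ∧
  (∀ a (l : L) b, (a, l, b) ∈ arcs →
      projOf arcs φ b ⊆ φ a ∨ ∀ v, v ∈ projOf arcs φ b → v ∉ φ a)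

/-- The invariant for a configuration. -/
def BubInv (c : Config n L) : Prop :=
  InvOn (c.stack ++ c.buffer) c.bubbles c.content c.arcs

lemma projOf_empty {φ : ℕ → Set (BNode n)} {x : ℕ} :
    projOf (∅ : Set (ℕ × L × ℕ)) φ x = φ x :=
  projOf_no_outgoing (fun q ⟨l, h⟩ => Set.notMem_empty _ h)

lemma invOn_perm {act act' : List ℕ} {B : Finset ℕ} {φ : ℕ → Set (BNode n)}
    {arcs : Set (ℕ × L × ℕ)} (hp : act.Perm act') (h : InvOn act B φ arcs) :
    InvOn act' B φ arcs := by
  obtain ⟨I1, I2, I3, I4, I5⟩ := h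
  refine ⟨?_, ?_, hp.nodup I3, ?_, I5⟩
  · intro a l b hab
    obtain ⟨h1, h2, h3⟩ := I1 a l b hab
    exact ⟨h1, h2, fun hb => h3 (hp.mem_iff.2 hb)⟩
  · intro x hx; exact I2 x (hp.mem_iff.2 hx)
  · intro a ha b hb
    exact I4 a (hp.mem_iff.2 ha) b (hp.mem_iff.2 hb)

lemma inv_init : BubInv (initConfig n L) := by
  have hact : (initConfig n L).stack ++ (initConfig n L).buffer
      = 0 :: (List.range n).map (· + 1) := rfl
  unfold BubInv
  rw [hact]
  refine ⟨?_, ?_, ?_, ?_, ?_⟩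
  · intro a l b hab; exact absurd hab (Set.notMem_empty _)
  · intro x hx
    rcases List.mem_cons.1 hx with rfl | hx
    · simp [initConfig]
    · obtain ⟨k, hk, rfl⟩ := List.mem_map.1 hx
      simp only [List.mem_range] at hk
      simp [initConfig]
      omega
  · refine List.Nodup.cons ?_ ?_
    · intro h
      obtain ⟨k, _, hk⟩ := List.mem_map.1 h
      omega
    · exact List.Nodup.map (fun a b => by omega) List.nodup_range
  · intro a ha b hb hab v hva hvb
    rw [show (initConfig n L).arcs = (∅ : Set (ℕ × L × ℕ)) from rfl, projOf_empty] at hva hvb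
    simp only [initConfig, Set.mem_setOf_eq] at hva hvb
    rcases hva with ⟨rfl, rfl⟩ | ⟨k, rfl, rfl⟩
    · rcases hvb with ⟨rfl, _⟩ | ⟨k, _, hk⟩
      · exact hab rfl
      · simp at hk
    · rcases hvb with ⟨_, hk⟩ | ⟨k', hb', hk'⟩
      · simp at hk
      · apply hab
        rw [hb']
        have : k = k' := by simpa using hk'
        rw [this]
  · intro a l b hab; exact absurd hab (Set.notMem_empty _)

end Inv
section Steps

open Relation List

variable {n : ℕ} {L : Type*}

/-- Adding an arc from an active bubble `u` to the popped top `v`. -/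
lemma invOn_addArc {act' : List ℕ} {B : Finset ℕ} {φ : ℕ → Set (BNode n)}
    {arcs : Set (ℕ × L × ℕ)} {u v : ℕ} {l : L}
    (h : InvOn (v :: act') B φ arcs) (hu : u ∈ act') :
    InvOn act' B φ (insert (u, l, v) arcs) := by
  obtain ⟨I1, I2, I3, I4, I5⟩ := h
  have hvB : v ∈ B := I2 v (mem_cons_self)
  have huB : u ∈ B := I2 u (mem_cons_of_mem _ hu)
  have hvnot : v ∉ act' := (nodup_cons.1 I3).1
  have hne : v ≠ u := fun h => hvnot (h ▸ hu)
  have hinu : ∀ p, ¬ ArcRel (insert (u, l, v) arcs) p u := by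
    rintro p hp
    rcases arcRel_insert.1 hp with ⟨l', h'⟩ | ⟨_, h2⟩
    · exact (I1 p l' u h').2.2 (mem_cons_of_mem _ hu)
    · exact hne h2.symm
  have hprojne : ∀ x, x ≠ u →
      projOf (insert (u, l, v) arcs) φ x = projOf arcs φ x :=
    fun x hx => projOf_insert_of_ne hinu hx
  have hproju : projOf (insert (u, l, v) arcs) φ u
      = projOf arcs φ u ∪ projOf arcs φ v := projOf_insert_src hinu
  have key : ∀ x ∈ act', ∀ w, w ∈ projOf (insert (u, l, v) arcs) φ x →
      w ∈ projOf arcs φ x ∨ (x = u ∧ w ∈ projOf arcs φ v) := by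
    intro x hx w hw
    by_cases hxu : x = u
    · subst hxu
      rw [hproju] at hw
      rcases hw with hw | hw
      · exact Or.inl hw
      · exact Or.inr ⟨rfl, hw⟩
    · rw [hprojne x hxu] at hw
      exact Or.inl hw
  refine ⟨?_, ?_, (nodup_cons.1 I3).2, ?_, ?_⟩
  · intro a l' b hab
    rcases Set.mem_insert_iff.1 hab with heq | hold
    · obtain ⟨rfl, rfl, rfl⟩ : a = u ∧ l' = l ∧ b = v := by
        simpa [Prod.ext_iff] using heq
      exact ⟨huB, hvB, hvnot⟩
    · obtain ⟨h1, h2, h3⟩ := I1 a l' b hold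
      exact ⟨h1, h2, fun hb => h3 (mem_cons_of_mem _ hb)⟩
  · intro x hx; exact I2 x (mem_cons_of_mem _ hx)
  · intro a ha b hb hab w hwa hwb
    rcases key a ha w hwa with hwa' | ⟨rfl, hwa'⟩ <;>
      rcases key b hb w hwb with hwb' | ⟨hbu, hwb'⟩
    · exact I4 a (mem_cons_of_mem _ ha) b (mem_cons_of_mem _ hb) hab w hwa' hwb'
    · subst hbu
      exact I4 a (mem_cons_of_mem _ ha) v (mem_cons_self)
        (fun h => hvnot (h ▸ ha)) w hwa' hwb'
    · exact I4 v (mem_cons_self) b (mem_cons_of_mem _ hb)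
        (fun h => hvnot (h ▸ hb)) w hwa' hwb'
    · exact hab (hbu.symm ▸ rfl)
  · intro a l' b hab
    rcases Set.mem_insert_iff.1 hab with heq | hold
    · obtain ⟨rfl, rfl, rfl⟩ : a = u ∧ l' = l ∧ b = v := by
        simpa [Prod.ext_iff] using heq
      refine Or.inr ?_
      intro w hw hwu
      rw [hprojne b hne] at hw
      exact I4 b (mem_cons_self) a (mem_cons_of_mem _ hu) hne w hw
        (content_subset_projOf hwu)
    · have hbu : b ≠ u := fun h => (I1 a l' b hold).2.2 (h ▸ mem_cons_of_mem _ hu)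
      rw [hprojne b hbu]
      exact I5 a l' b hold

/-- BubbleAttach: adding an arc `(u, l, v)` where `u` is an open bubble on the
stack, and absorbing `ψ(v)` into `φ(u)`. -/
lemma invOn_attach {act'' : List ℕ} {B : Finset ℕ} {φ : ℕ → Set (BNode n)}
    {arcs : Set (ℕ × L × ℕ)} {u v : ℕ} {l : L}
    (h : InvOn (v :: u :: act'') B φ arcs) :
    InvOn (u :: act'') B (Function.update φ u (φ u ∪ projOf arcs φ v))
      (insert (u, l, v) arcs) := by
  obtain ⟨I1, I2, I3, I4, I5⟩ := h
  set S := projOf arcs φ v with hS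
  set φ' := Function.update φ u (φ u ∪ S) with hφ'
  have hvB : v ∈ B := I2 v (mem_cons_self)
  have huB : u ∈ B := I2 u (mem_cons_of_mem _ (mem_cons_self))
  have hvnot : v ∉ u :: act'' := (nodup_cons.1 I3).1
  have hne : v ≠ u := fun h => hvnot (h ▸ mem_cons_self)
  have hin_old : ∀ p, ¬ ArcRel arcs p u := by
    rintro p ⟨l', h'⟩
    exact (I1 p l' u h').2.2 (mem_cons_of_mem _ (mem_cons_self))
  have hinu : ∀ p, ¬ ArcRel (insert (u, l, v) arcs) p u := by
    rintro p hp
    rcases arcRel_insert.1 hp with h' | ⟨_, h2⟩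
    · exact hin_old p h'
    · exact hne h2.symm
  have hnr : ∀ x, x ≠ u → ∀ y, ReflTransGen (ArcRel arcs) x y → y ≠ u := by
    intro x hx y hy hyu
    exact hx (rtg_no_incoming hin_old (hyu ▸ hy))
  have hprojne : ∀ x, x ≠ u →
      projOf (insert (u, l, v) arcs) φ' x = projOf arcs φ x := by
    intro x hx
    rw [projOf_insert_of_ne hinu hx, hφ', projOf_update_of_not_reach (hnr x hx)]
  have hproju : projOf (insert (u, l, v) arcs) φ' u = projOf arcs φ u ∪ S := by
    rw [projOf_insert_src hinu, hφ', projOf_update_self,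
      projOf_update_of_not_reach (hnr v hne), ← hS, Set.union_assoc, Set.union_self]
  have key : ∀ x ∈ u :: act'', ∀ w, w ∈ projOf (insert (u, l, v) arcs) φ' x →
      w ∈ projOf arcs φ x ∨ (x = u ∧ w ∈ S) := by
    intro x hx w hw
    by_cases hxu : x = u
    · subst hxu
      rw [hproju] at hw
      rcases hw with hw | hw
      · exact Or.inl hw
      · exact Or.inr ⟨rfl, hw⟩
    · rw [hprojne x hxu] at hw
      exact Or.inl hw
  refine ⟨?_, ?_, (nodup_cons.1 I3).2, ?_, ?_⟩
  · intro a l' b hab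
    rcases Set.mem_insert_iff.1 hab with heq | hold
    · obtain ⟨rfl, rfl, rfl⟩ : a = u ∧ l' = l ∧ b = v := by
        simpa [Prod.ext_iff] using heq
      exact ⟨huB, hvB, hvnot⟩
    · obtain ⟨h1, h2, h3⟩ := I1 a l' b hold
      exact ⟨h1, h2, fun hb => h3 (mem_cons_of_mem _ hb)⟩
  · intro x hx; exact I2 x (mem_cons_of_mem _ hx)
  · intro a ha b hb hab w hwa hwb
    rcases key a ha w hwa with hwa' | ⟨rfl, hwa'⟩ <;>
      rcases key b hb w hwb with hwb' | ⟨hbu, hwb'⟩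
    · exact I4 a (mem_cons_of_mem _ ha) b (mem_cons_of_mem _ hb) hab w hwa' hwb'
    · subst hbu
      exact I4 a (mem_cons_of_mem _ ha) v (mem_cons_self)
        (fun h => hvnot (h ▸ ha)) w hwa' hwb'
    · exact I4 v (mem_cons_self) b (mem_cons_of_mem _ hb)
        (fun h => hvnot (h ▸ hb)) w hwa' hwb'
    · exact hab (hbu.symm ▸ rfl)
  · intro a l' b hab
    rcases Set.mem_insert_iff.1 hab with heq | hold
    · obtain ⟨rfl, rfl, rfl⟩ : a = u ∧ l' = l ∧ b = v := by
        simpa [Prod.ext_iff] using heq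
      refine Or.inl ?_
      rw [hprojne b hne, hφ', Function.update_self]
      exact Set.subset_union_right
    · have hbu : b ≠ u :=
        fun h => (I1 a l' b hold).2.2 (h ▸ mem_cons_of_mem _ (mem_cons_self))
      rw [hprojne b hbu]
      by_cases hau : a = u
      · subst hau
        rw [hφ', Function.update_self]
        rcases I5 a l' b hold with hsub | hdis
        · exact Or.inl (hsub.trans Set.subset_union_left)
        · refine Or.inr ?_
          intro w hw hwc
          rcases hwc with hwc | hwc
          · exact hdis w hw hwc
          · exact I4 v (mem_cons_self) a (mem_cons_of_mem _ (mem_cons_self))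
              hne w hwc
              (projOf_subset_of_rtg (ReflTransGen.single ⟨l', hold⟩) hw)
      · rw [hφ', Function.update_of_ne hau]
        exact I5 a l' b hold

end Steps
section OpenStep

open Relation List

variable {n : ℕ} {L : Type*}

/-- BubbleOpen: creating a fresh bubble `α` with arcs to `v1`, `v2`. -/
lemma invOn_open {act'' : List ℕ} {B : Finset ℕ} {φ : ℕ → Set (BNode n)}
    {arcs : Set (ℕ × L × ℕ)} {v1 v2 α : ℕ} {l1 l2 : L}
    (h : InvOn (v1 :: v2 :: act'') B φ arcs) (hα : α ∉ B) :
    InvOn (α :: act'') (insert α B)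
      (Function.update φ α (projOf arcs φ v2 ∪ projOf arcs φ v1))
      (insert (α, l2, v2) (insert (α, l1, v1) arcs)) := by
  obtain ⟨I1, I2, I3, I4, I5⟩ := h
  set S := projOf arcs φ v2 ∪ projOf arcs φ v1 with hS
  set φ' := Function.update φ α S with hφ'
  set arcs1 := insert (α, l1, v1) arcs with harcs1
  set arcs2 := insert (α, l2, v2) arcs1 with harcs2
  have hv1B : v1 ∈ B := I2 v1 (mem_cons_self)
  have hv2B : v2 ∈ B := I2 v2 (mem_cons_of_mem _ (mem_cons_self))
  have hv1α : v1 ≠ α := fun h => hα (h ▸ hv1B)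
  have hv2α : v2 ≠ α := fun h => hα (h ▸ hv2B)
  have hαact : α ∉ v1 :: v2 :: act'' := fun h => hα (I2 α h)
  have hv1not : v1 ∉ v2 :: act'' := (nodup_cons.1 I3).1
  have hv2not : v2 ∉ act'' := (nodup_cons.1 (nodup_cons.1 I3).2).1
  have hv12 : v1 ≠ v2 := fun h => hv1not (h ▸ mem_cons_self)
  have hin_old : ∀ p, ¬ ArcRel arcs p α := by
    rintro p ⟨l', h'⟩
    exact hα (I1 p l' α h').2.1
  have hin1 : ∀ p, ¬ ArcRel arcs1 p α := by
    rintro p hp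
    rcases arcRel_insert.1 hp with h' | ⟨_, h2⟩
    · exact hin_old p h'
    · exact hv1α h2.symm
  have hin2 : ∀ p, ¬ ArcRel arcs2 p α := by
    rintro p hp
    rcases arcRel_insert.1 hp with h' | ⟨_, h2⟩
    · exact hin1 p h'
    · exact hv2α h2.symm
  have hout_old : ∀ q, ¬ ArcRel arcs α q := by
    rintro q ⟨l', h'⟩
    exact hα (I1 α l' q h').1
  have hnr : ∀ x, x ≠ α → ∀ y, ReflTransGen (ArcRel arcs) x y → y ≠ α := by
    intro x hx y hy hyα
    exact hx (rtg_no_incoming hin_old (hyα ▸ hy))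
  have hprojne : ∀ x, x ≠ α → projOf arcs2 φ' x = projOf arcs φ x := by
    intro x hx
    rw [harcs2, projOf_insert_of_ne hin2 hx, harcs1, projOf_insert_of_ne hin1 hx,
      hφ', projOf_update_of_not_reach (hnr x hx)]
  have hprojα : projOf arcs2 φ' α = S := by
    rw [harcs2, projOf_insert_src hin2, harcs1, projOf_insert_src hin1,
      projOf_insert_of_ne hin1 hv2α, hφ', projOf_no_outgoing hout_old,
      Function.update_self, projOf_update_of_not_reach (hnr v1 hv1α),
      projOf_update_of_not_reach (hnr v2 hv2α), hS]
    ext w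
    simp only [Set.mem_union]
    tauto
  have key : ∀ x ∈ α :: act'', ∀ w, w ∈ projOf arcs2 φ' x →
      (x ∈ act'' ∧ w ∈ projOf arcs φ x) ∨ (x = α ∧ w ∈ S) := by
    intro x hx w hw
    by_cases hxα : x = α
    · subst hxα
      rw [hprojα] at hw
      exact Or.inr ⟨rfl, hw⟩
    · rw [hprojne x hxα] at hw
      rcases mem_cons.1 hx with h | h
      · exact absurd h hxα
      · exact Or.inl ⟨h, hw⟩
  have hSdis : ∀ b ∈ act'', ∀ w, w ∈ S → w ∈ projOf arcs φ b → False := by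
    intro b hb w hwS hwb
    rcases hwS with hw | hw
    · exact I4 v2 (mem_cons_of_mem _ (mem_cons_self))
        b (mem_cons_of_mem _ (mem_cons_of_mem _ hb))
        (fun h => hv2not (h ▸ hb)) w hw hwb
    · exact I4 v1 (mem_cons_self)
        b (mem_cons_of_mem _ (mem_cons_of_mem _ hb))
        (fun h => hv1not (h ▸ mem_cons_of_mem _ hb)) w hw hwb
  refine ⟨?_, ?_, ?_, ?_, ?_⟩
  · intro a l' b hab
    have hnew : ∀ (v : ℕ), v ∈ v1 :: v2 :: act'' → v ∈ B ∧ v ∉ α :: act'' → True := by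
      intro _ _ _; trivial
    rcases Set.mem_insert_iff.1 hab with heq | hab1
    · obtain ⟨rfl, rfl, rfl⟩ : a = α ∧ l' = l2 ∧ b = v2 := by
        simpa [Prod.ext_iff] using heq
      refine ⟨Finset.mem_insert_self _ _, Finset.mem_insert_of_mem hv2B, ?_⟩
      intro hmem
      rcases mem_cons.1 hmem with h | h
      · exact hv2α h
      · exact hv2not h
    · rcases Set.mem_insert_iff.1 hab1 with heq | hold
      · obtain ⟨rfl, rfl, rfl⟩ : a = α ∧ l' = l1 ∧ b = v1 := by
          simpa [Prod.ext_iff] using heq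
        refine ⟨Finset.mem_insert_self _ _, Finset.mem_insert_of_mem hv1B, ?_⟩
        intro hmem
        rcases mem_cons.1 hmem with h | h
        · exact hv1α h
        · exact hv1not (mem_cons_of_mem _ h)
      · obtain ⟨h1, h2, h3⟩ := I1 a l' b hold
        refine ⟨Finset.mem_insert_of_mem h1, Finset.mem_insert_of_mem h2, ?_⟩
        intro hmem
        rcases mem_cons.1 hmem with h | h
        · exact hα (h ▸ h2)
        · exact h3 (mem_cons_of_mem _ (mem_cons_of_mem _ h))
  · intro x hx
    rcases mem_cons.1 hx with rfl | h
    · exact Finset.mem_insert_self _ _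
    · exact Finset.mem_insert_of_mem (I2 x (mem_cons_of_mem _ (mem_cons_of_mem _ h)))
  · refine nodup_cons.2 ⟨?_, (nodup_cons.1 (nodup_cons.1 I3).2).2⟩
    intro h
    exact hαact (mem_cons_of_mem _ (mem_cons_of_mem _ h))
  · intro a ha b hb hab w hwa hwb
    rcases key a ha w hwa with ⟨ha', hwa'⟩ | ⟨rfl, hwa'⟩ <;>
      rcases key b hb w hwb with ⟨hb', hwb'⟩ | ⟨hbα, hwb'⟩
    · exact I4 a (mem_cons_of_mem _ (mem_cons_of_mem _ ha'))
        b (mem_cons_of_mem _ (mem_cons_of_mem _ hb')) hab w hwa' hwb'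
    · subst hbα
      exact hSdis a ha' w hwb' hwa'
    · exact hSdis b hb' w hwa' hwb'
    · exact hab (hbα.symm ▸ rfl)
  · intro a l' b hab
    rcases Set.mem_insert_iff.1 hab with heq | hab1
    · obtain ⟨rfl, rfl, rfl⟩ : a = α ∧ l' = l2 ∧ b = v2 := by
        simpa [Prod.ext_iff] using heq
      refine Or.inl ?_
      rw [hprojne b hv2α, hφ', Function.update_self]
      exact Set.subset_union_left.trans (by rw [hS])
    · rcases Set.mem_insert_iff.1 hab1 with heq | hold
      · obtain ⟨rfl, rfl, rfl⟩ : a = α ∧ l' = l1 ∧ b = v1 := by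
          simpa [Prod.ext_iff] using heq
        refine Or.inl ?_
        rw [hprojne b hv1α, hφ', Function.update_self]
        exact Set.subset_union_right.trans (by rw [hS])
      · have haα : a ≠ α := fun h => hα (h ▸ (I1 a l' b hold).1)
        have hbα : b ≠ α := fun h => hα (h ▸ (I1 a l' b hold).2.1)
        rw [hprojne b hbα, hφ', Function.update_of_ne haα]
        exact I5 a l' b hold

end OpenStep
section Main

open Relation List

variable {n : ℕ} {L : Type*}

lemma inv_preserved {conj : L} {c c' : Config n L}
    (h : BubInv c) (hs : Step conj c c') : BubInv c' := by
  cases hs with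
  | shift b1 β hbuf =>
    have h' : InvOn (c.stack ++ (b1 :: β)) c.bubbles c.content c.arcs := by
      have h0 : InvOn (c.stack ++ c.buffer) c.bubbles c.content c.arcs := h
      rwa [hbuf] at h0
    show InvOn ((b1 :: c.stack) ++ β) c.bubbles c.content c.arcs
    exact invOn_perm List.perm_middle h'
  | leftArc lbl s1 σ b1 β hstk hbuf hs1o hb1o hroot =>
    have h' : InvOn (s1 :: (σ ++ (b1 :: β))) c.bubbles c.content c.arcs := by
      have h0 : InvOn (c.stack ++ c.buffer) c.bubbles c.content c.arcs := h
      rw [hstk, hbuf] at h0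
      exact h0
    show InvOn (σ ++ c.buffer) c.bubbles c.content (insert (b1, lbl, s1) c.arcs)
    rw [hbuf]
    exact invOn_addArc h' (by simp)
  | rightArc lbl s1 s2 σ hstk hs1o hs2o =>
    have h' : InvOn (s1 :: ((s2 :: σ) ++ c.buffer)) c.bubbles c.content c.arcs := by
      have h0 : InvOn (c.stack ++ c.buffer) c.bubbles c.content c.arcs := h
      rw [hstk] at h0
      exact h0
    show InvOn ((s2 :: σ) ++ c.buffer) c.bubbles c.content (insert (s2, lbl, s1) c.arcs)
    exact invOn_addArc h' (by simp)
  | bubbleOpen lbl s1 s2 σ α hstk hs1o hs2o hroot hfresh =>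
    have h' : InvOn (s1 :: (s2 :: (σ ++ c.buffer))) c.bubbles c.content c.arcs := by
      have h0 : InvOn (c.stack ++ c.buffer) c.bubbles c.content c.arcs := h
      rw [hstk] at h0
      exact h0
    show InvOn ((α :: σ) ++ c.buffer) (insert α c.bubbles)
      (Function.update c.content α (c.proj s2 ∪ c.proj s1))
      (insert (α, conj, s2) (insert (α, lbl, s1) c.arcs))
    exact invOn_open h' hfresh
  | bubbleAttach lbl s1 s2 σ hstk hs1o hs2o =>
    have h' : InvOn (s1 :: (s2 :: (σ ++ c.buffer))) c.bubbles c.content c.arcs := by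
      have h0 : InvOn (c.stack ++ c.buffer) c.bubbles c.content c.arcs := h
      rw [hstk] at h0
      exact h0
    show InvOn ((s2 :: σ) ++ c.buffer) c.bubbles
      (Function.update c.content s2 (c.content s2 ∪ c.proj s1))
      (insert (s2, lbl, s1) c.arcs)
    exact invOn_attach h'
  | bubbleClose s1 σ hstk hs1o =>
    have h' : InvOn (s1 :: (σ ++ c.buffer)) c.bubbles c.content c.arcs := by
      have h0 : InvOn (c.stack ++ c.buffer) c.bubbles c.content c.arcs := h
      rw [hstk] at h0
      exact h0
    show InvOn (σ ++ (s1 :: c.buffer)) c.bubbles c.content c.arcs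
    exact invOn_perm List.perm_middle.symm h'

lemma inv_reachable {conj : L} {c : Config n L} (h : Reachable conj c) :
    BubInv c := by
  induction h with
  | refl => exact inv_init
  | tail _ hstep ih => exact inv_preserved ih hstep

end Main
/-- **(Contained-projections invariant)** In every reachable configuration, if
`α2` is reachable from `α1` by a nonempty directed path of arcs, then `ψ(α2)` is
either contained in `φ(α1)` or disjoint from it. -/
theorem containedProjections_invariant (n : ℕ) (L : Type*) [Fintype L] (conj : L)
    (c : Config n L) (hreach : Reachable conj c) :
    ∀ α1 ∈ c.bubbles, ∀ α2 ∈ c.bubbles,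
      Relation.TransGen (ArcRel c.arcs) α1 α2 →
      c.proj α2 ⊆ c.content α1 ∨ c.proj α2 ∩ c.content α1 = ∅ := by
  obtain ⟨-, -, -, -, I5⟩ := inv_reachable hreach
  intro α1 _ α2 _ htg
  obtain ⟨x, ⟨l, harc⟩, hx2⟩ := Relation.TransGen.head'_iff.1 htg
  rcases I5 α1 l x harc with hsub | hdis
  · exact Or.inl fun v hv => hsub (projOf_subset_of_rtg hx2 hv)
  · right
    rw [Set.eq_empty_iff_forall_notMem]
    rintro v ⟨hv1, hv2⟩
    exact hdis v (projOf_subset_of_rtg hx2 hv1) hv2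
end

section
/- (Roothood invariant) For every sentence W = w_1, …, w_n and every reachable configuration (σ, β, B, φ, A, O) of the Bubble-Hybrid transition system for W, the node RT belongs to the content of exactly one bubble in B, namely the initial bubble α_0, and moreover φ(α_0) = {RT} (it remains a singleton), α_0 has no incoming arc in A, α_0 ∉ O, and α_0 is the bottommost element of the stack σ. -/
section Aux

variable {n : ℕ} {L : Type*}

lemma no_path_to_root {arcs : Set (ℕ × L × ℕ)}
    (h4 : ¬ ∃ p l, (p, l, (0 : ℕ)) ∈ arcs) {s : ℕ}
    (h : Relation.ReflTransGen (ArcRel arcs) s 0) : s = 0 := by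
  rcases h.cases_tail with h | ⟨c, _, l, hl⟩
  · exact h.symm
  · exact absurd ⟨c, l, hl⟩ h4

lemma root_notMem_proj {arcs : Set (ℕ × L × ℕ)} {φ : ℕ → Set (BNode n)}
    (h3 : ∀ α, (none : BNode n) ∈ φ α → α = 0)
    (h4 : ¬ ∃ p l, (p, l, (0 : ℕ)) ∈ arcs) {s : ℕ} (hs : s ≠ 0) :
    (none : BNode n) ∉ projOf arcs φ s := by
  rintro ⟨α', hr, hmem⟩
  rcases h3 _ hmem
  exact hs (no_path_to_root h4 hr)

/-- The strengthened roothood invariant. -/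
structure RootInv (c : Config n L) : Prop where
  hb : (0 : ℕ) ∈ c.bubbles
  hc : c.content 0 = {(none : BNode n)}
  h3 : ∀ α, (none : BNode n) ∈ c.content α → α = 0
  h4 : ¬ ∃ p l, (p, l, (0 : ℕ)) ∈ c.arcs
  h5 : (0 : ℕ) ∉ c.openB
  h6 : ∃ σ', c.stack = σ' ++ [0] ∧ (0 : ℕ) ∉ σ'
  h7 : (0 : ℕ) ∉ c.buffer

lemma cons_eq_append_single {s1 : ℕ} {σ σ' : List ℕ}
    (h : s1 :: σ = σ' ++ [(0 : ℕ)]) (h0 : (0 : ℕ) ∉ σ') :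
    (σ' = [] ∧ s1 = 0 ∧ σ = []) ∨
      (∃ t, σ = t ++ [0] ∧ s1 ≠ 0 ∧ (0 : ℕ) ∉ t) := by
  cases σ' with
  | nil =>
    simp only [List.nil_append, List.cons.injEq] at h
    exact Or.inl ⟨rfl, h.1, h.2⟩
  | cons a t =>
    simp only [List.cons_append, List.cons.injEq] at h
    simp only [List.mem_cons, not_or] at h0
    exact Or.inr ⟨t, h.2, h.1 ▸ (Ne.symm h0.1), h0.2⟩

lemma rootInv_init : RootInv (initConfig n L) := by
  refine ⟨?_, ?_, ?_, ?_, ?_, ⟨[], rfl, by simp⟩, ?_⟩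
  · simp [initConfig]
  · ext v
    constructor
    · rintro (⟨-, rfl⟩ | ⟨k, hk, -⟩)
      · rfl
      · exact absurd hk (by omega)
    · rintro rfl
      exact Or.inl ⟨rfl, rfl⟩
  · intro α hα
    simp only [initConfig, Set.mem_setOf_eq] at hα
    rcases hα with ⟨h, -⟩ | ⟨k, -, hk⟩
    · exact h
    · exact absurd hk (by simp)
  · rintro ⟨p, l, hpl⟩; exact hpl
  · simp [initConfig]
  · simp only [initConfig, List.mem_map, List.mem_range]
    rintro ⟨k, -, hk⟩; omega

lemma rootInv_step {conj : L} {c c' : Config n L}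
    (h : Step conj c c') (hI : RootInv c) : RootInv c' := by
  obtain ⟨hb, hc, h3, h4, h5, ⟨σ', hσ', h0σ'⟩, h7⟩ := hI
  cases h with
  | shift b1 β hbuf =>
    rw [hbuf] at h7
    simp only [List.mem_cons, not_or] at h7
    exact ⟨hb, hc, h3, h4, h5,
      ⟨b1 :: σ', by simp [hσ'], by simp only [List.mem_cons, not_or]; exact ⟨h7.1, h0σ'⟩⟩, h7.2⟩
  | leftArc lbl s1 σ b1 β hstk hbuf hs1 hb1 hroot =>
    rw [hstk] at hσ'
    rcases cons_eq_append_single hσ' h0σ' with ⟨-, rfl, -⟩ | ⟨t, ht, hne, h0t⟩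
    · exact absurd hc hroot
    · refine ⟨hb, hc, h3, ?_, h5, ⟨t, ht, h0t⟩, h7⟩
      rintro ⟨p, l, hpl⟩
      simp only [Set.mem_insert_iff, Prod.mk.injEq] at hpl
      rcases hpl with ⟨-, -, h⟩ | h
      · exact hne h.symm
      · exact h4 ⟨p, l, h⟩
  | rightArc lbl s1 s2 σ hstk hs1 hs2 =>
    rw [hstk] at hσ'
    rcases cons_eq_append_single hσ' h0σ' with ⟨h, -, -⟩ | ⟨t, ht, hne, h0t⟩
    · rw [h] at hσ'; simp at hσ'
    · refine ⟨hb, hc, h3, ?_, h5, ⟨t, ht, h0t⟩, h7⟩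
      rintro ⟨p, l, hpl⟩
      simp only [Set.mem_insert_iff, Prod.mk.injEq] at hpl
      rcases hpl with ⟨-, -, h⟩ | h
      · exact hne h.symm
      · exact h4 ⟨p, l, h⟩
  | bubbleOpen lbl s1 s2 σ α hstk hs1 hs2 hroot hfresh =>
    rw [hstk] at hσ'
    rcases cons_eq_append_single hσ' h0σ' with ⟨h, -, -⟩ | ⟨t, ht, hne1, h0t⟩
    · rw [h] at hσ'; simp at hσ'
    · rcases cons_eq_append_single ht h0t with ⟨-, rfl, -⟩ | ⟨u, hu, hne2, h0u⟩
      · exact absurd hc hroot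
      · have hα0 : α ≠ 0 := fun h => hfresh (h ▸ hb)
        have h4' : ¬ ∃ p l, (p, l, (0 : ℕ)) ∈
            insert (α, conj, s2) (insert (α, lbl, s1) c.arcs) := by
          rintro ⟨p, l, hpl⟩
          simp only [Set.mem_insert_iff, Prod.mk.injEq] at hpl
          rcases hpl with ⟨-, -, h⟩ | ⟨-, -, h⟩ | h
          · exact hne2 h.symm
          · exact hne1 h.symm
          · exact h4 ⟨p, l, h⟩
        refine ⟨Finset.mem_insert_of_mem hb, ?_, ?_, h4', ?_,
          ⟨α :: u, by simp [hu], by simp [Ne.symm hα0, h0u]⟩, h7⟩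
        · simp only [Function.update_of_ne (Ne.symm hα0), hc]
        · intro β hβ
          dsimp only at hβ
          rcases eq_or_ne β α with rfl | hβα
          · rw [Function.update_self] at hβ
            exfalso
            rcases hβ with hβ | hβ
            · exact root_notMem_proj h3 h4 hne2 hβ
            · exact root_notMem_proj h3 h4 hne1 hβ
          · rw [Function.update_of_ne hβα] at hβ
            exact h3 _ hβ
        · simp only [Finset.mem_insert, not_or]
          exact ⟨Ne.symm hα0, h5⟩
  | bubbleAttach lbl s1 s2 σ hstk hs1 hs2 =>
    rw [hstk] at hσ'
    rcases cons_eq_append_single hσ' h0σ' with ⟨h, -, -⟩ | ⟨t, ht, hne1, h0t⟩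
    · rw [h] at hσ'; simp at hσ'
    · have hs20 : s2 ≠ 0 := fun h => h5 (h ▸ hs2)
      refine ⟨hb, by simpa [Function.update_of_ne (Ne.symm hs20)] using hc, ?_, ?_,
        h5, ⟨t, ht, h0t⟩, h7⟩
      · intro β hβ
        dsimp only at hβ
        rcases eq_or_ne β s2 with rfl | hβs2
        · rw [Function.update_self] at hβ
          rcases hβ with hβ | hβ
          · exact h3 _ hβ
          · exact absurd hβ (root_notMem_proj h3 h4 hne1)
        · rw [Function.update_of_ne hβs2] at hβ
          exact h3 _ hβ
      · rintro ⟨p, l, hpl⟩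
        simp only [Set.mem_insert_iff, Prod.mk.injEq] at hpl
        rcases hpl with ⟨-, -, h⟩ | h
        · exact hne1 h.symm
        · exact h4 ⟨p, l, h⟩
  | bubbleClose s1 σ hstk hs1 =>
    have hs10 : s1 ≠ 0 := fun h => h5 (h ▸ hs1)
    rw [hstk] at hσ'
    rcases cons_eq_append_single hσ' h0σ' with ⟨-, h, -⟩ | ⟨t, ht, -, h0t⟩
    · exact absurd h hs10
    · exact ⟨hb, hc, h3, h4, fun h => h5 (Finset.mem_of_mem_erase h),
        ⟨t, ht, h0t⟩, by simp [Ne.symm hs10, h7]⟩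

end Aux

/-- **(Roothood invariant)** In every reachable configuration, `RT` belongs to
the content of exactly one bubble, namely the initial bubble `α_0` (here named
`0`); moreover `φ(α_0) = {RT}`, `α_0` has no incoming arc, `α_0` is not open,
and `α_0` is the bottommost element of the stack. -/
theorem roothood_invariant (n : ℕ) (L : Type*) [Fintype L] (conj : L)
    (c : Config n L) (hreach : Reachable conj c) :
    (0 : ℕ) ∈ c.bubbles ∧
    c.content 0 = {(none : BNode n)} ∧
    (∀ α ∈ c.bubbles, (none : BNode n) ∈ c.content α → α = 0) ∧
    (¬ ∃ p l, (p, l, (0 : ℕ)) ∈ c.arcs) ∧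
    (0 : ℕ) ∉ c.openB ∧
    c.stack.getLast? = some 0 := by
  have hI : RootInv c := by
    induction hreach with
    | refl => exact rootInv_init
    | tail _ hstep ih => exact rootInv_step hstep ih
  obtain ⟨hb, hc, h3, h4, h5, ⟨σ', hσ', -⟩, -⟩ := hI
  refine ⟨hb, hc, fun α _ hα => h3 α hα, h4, h5, ?_⟩
  rw [hσ']
  simp
end
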